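/- Let M₁, M₂, J₁, J₂, R₁, R₂ be nonempty finite types; set M := M₁ × M₂ (size m := |M|), J := J₁ × J₂ (size n := |J|), and let β : J → Fin B be a surjective block labeling with block sizes n_α := |β⁻¹(α)| ≥ 1 and diagonal projections P_α ∈ Matrix(J, J, ℂ). For A ∈ Matrix((M×J)×(R₁×R₂), (M×J)×(R₁×R₂), ℂ) define the channel C[A] := Σ_{α} (1/(m·n_α)) · ( (I_M ⊗ P_α) ⊗ Tr_{M×J}[ (I_M ⊗ P_α ⊗ I)·A·(I_M ⊗ P_α ⊗ I) ] ) (full depolarisation on M and block depolarisation on J). Then ‖ Tr_{M₁×J₁×R₁}( C[A] ) ‖_F ≤ ( √( n·|J₁| ) / √|M₂| ) · ( Σ_{α} 1/√(n_α) ) · ‖ Tr_{M×R₁} A ‖_F, where Tr_{M₁×J₁×R₁} and Tr_{M×R₁} denote partial traces over the indicated tensor factors and ‖·‖_F is the Frobenius norm. -/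

import Mathlib

open Finset Matrix
open scoped Kronecker

/-- The Frobenius norm `‖M‖_F = √(Σ_{i,j} |M_{ij}|²)` of a complex matrix. -/
noncomputable def frobeniusNorm {n m : Type*} [Fintype n] [Fintype m]
    (M : Matrix n m ℂ) : ℝ :=
  Real.sqrt (∑ i, ∑ j, ‖M i j‖ ^ 2)

/-- Partial trace over the first tensor factor:
`(Tr_N M)(r, r') = Σ_n M((n,r), (n,r'))`. -/
noncomputable def ptraceN {N R : Type*} [Fintype N]
    (A : Matrix (N × R) (N × R) ℂ) : Matrix R R ℂ :=
  Matrix.of fun r r' => ∑ n, A (n, r) (n, r')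

/-- Partial trace over the `M₁`, `J₁` and `R₁` tensor factors of a matrix indexed by
`((M₁ × M₂) × (J₁ × J₂)) × (R₁ × R₂)`. -/
noncomputable def ptraceM1J1R1 {M₁ M₂ J₁ J₂ R₁ R₂ : Type*}
    [Fintype M₁] [Fintype J₁] [Fintype R₁]
    (A : Matrix (((M₁ × M₂) × (J₁ × J₂)) × (R₁ × R₂))
                (((M₁ × M₂) × (J₁ × J₂)) × (R₁ × R₂)) ℂ) :
    Matrix ((M₂ × J₂) × R₂) ((M₂ × J₂) × R₂) ℂ :=
  Matrix.of fun p q => ∑ a : M₁, ∑ b : J₁, ∑ c : R₁,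
    A (((a, p.1.1), (b, p.1.2)), (c, p.2)) (((a, q.1.1), (b, q.1.2)), (c, q.2))

/-- Partial trace over the `M = M₁ × M₂` and `R₁` tensor factors of a matrix indexed by
`((M₁ × M₂) × (J₁ × J₂)) × (R₁ × R₂)`. -/
noncomputable def ptraceMR1 {M₁ M₂ J₁ J₂ R₁ R₂ : Type*}
    [Fintype M₁] [Fintype M₂] [Fintype R₁]
    (A : Matrix (((M₁ × M₂) × (J₁ × J₂)) × (R₁ × R₂))
                (((M₁ × M₂) × (J₁ × J₂)) × (R₁ × R₂)) ℂ) :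
    Matrix ((J₁ × J₂) × R₂) ((J₁ × J₂) × R₂) ℂ :=
  Matrix.of fun p q => ∑ a : M₁ × M₂, ∑ c : R₁,
    A ((a, p.1), (c, p.2)) ((a, q.1), (c, q.2))

/-!
Since the projectors `P α` are diagonal, the `α`-term of the channel, traced over
`M₁ × J₁ × R₁`, is a Kronecker product `W_α ⊗ S_α`: `W_α` is diagonal on `M₂ × J₂` with entries
`|M₁| · #{j₁ | β (j₁, j₂) = α}`, and `S_α` is the sum of the diagonal blocks `T_{jj}` of
`T = Tr_{M×R₁} A` over the block `β⁻¹(α)`. The Frobenius norm is multiplicative on Kronecker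
products, `‖W_α‖ ≤ √(|M₂| |J₂|) |M₁| |J₁|` entrywise, and `‖S_α‖ ≤ √n_α ‖T‖` by Cauchy–Schwarz,
since the diagonal blocks of `T` carry at most its whole Frobenius norm. The triangle inequality
over `α` then gives the bound, the factor `|M₁|` cancelling against `|M| = |M₁| |M₂|`.
-/

attribute [local instance] Matrix.frobeniusSeminormedAddCommGroup
  Matrix.frobeniusNormedAddCommGroup Matrix.frobeniusNormedSpace

namespace Matrix

variable {α l m n p : Type*} [Fintype l] [Fintype m] [Fintype n] [Fintype p]

theorem frobenius_norm_sq [SeminormedAddCommGroup α] (A : Matrix m n α) :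
    ‖A‖ ^ 2 = ∑ i, ∑ j, ‖A i j‖ ^ 2 := by
  rw [frobenius_norm_def, ← Real.rpow_natCast, ← Real.rpow_mul (by positivity)]
  simp

theorem frobenius_norm_kronecker [SeminormedRing α] [NormMulClass α]
    (A : Matrix l m α) (B : Matrix n p α) : ‖A ⊗ₖ B‖ = ‖A‖ * ‖B‖ := by
  rw [← sq_eq_sq₀ (norm_nonneg _) (by positivity), mul_pow, frobenius_norm_sq,
    frobenius_norm_sq, frobenius_norm_sq, Finset.sum_mul_sum]
  simp only [Fintype.sum_prod_type, kronecker_apply, norm_mul, mul_pow, Finset.sum_mul_sum]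

theorem frobenius_norm_diagonal_le [DecidableEq n] [SeminormedAddCommGroup α] {d : n → α}
    {c : ℝ} (hc : 0 ≤ c) (hd : ∀ i, ‖d i‖ ≤ c) :
    ‖diagonal d‖ ≤ √(Fintype.card n) * c := by
  have hsum : ∑ i, ‖d i‖ ^ 2 ≤ Fintype.card n * c ^ 2 := by
    simpa using Finset.sum_le_card_nsmul univ _ _ fun i _ =>
      pow_le_pow_left₀ (norm_nonneg _) (hd i) 2
  calc ‖diagonal d‖ = √(∑ i, ‖d i‖ ^ 2) := by
        rw [frobenius_norm_diagonal, PiLp.norm_eq_of_L2]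
    _ ≤ √(Fintype.card n * c ^ 2) := Real.sqrt_le_sqrt hsum
    _ = √(Fintype.card n) * c := by rw [Real.sqrt_mul (Nat.cast_nonneg _), Real.sqrt_sq hc]

end Matrix

theorem frobeniusNorm_eq_norm {m n : Type*} [Fintype m] [Fintype n] (A : Matrix m n ℂ) :
    frobeniusNorm A = ‖A‖ := by
  rw [frobeniusNorm, ← Matrix.frobenius_norm_sq, Real.sqrt_sq (norm_nonneg _)]

def diagBlock {J R α : Type*} (T : Matrix (J × R) (J × R) α) (j : J) : Matrix R R α :=
  of fun r r' => T (j, r) (j, r')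

section diagBlock

variable {J R α : Type*} [Fintype J] [Fintype R] [SeminormedAddCommGroup α]

theorem sum_frobenius_norm_sq_diagBlock_le (T : Matrix (J × R) (J × R) α) :
    ∑ j, ‖diagBlock T j‖ ^ 2 ≤ ‖T‖ ^ 2 := by
  simp only [Matrix.frobenius_norm_sq, Fintype.sum_prod_type, diagBlock, of_apply]
  gcongr with j _ r _
  exact Finset.single_le_sum (f := fun j' => ∑ r', ‖T (j, r) (j', r')‖ ^ 2)
    (fun _ _ => by positivity) (mem_univ j)

theorem frobenius_norm_sum_diagBlock_le (T : Matrix (J × R) (J × R) α) (s : Finset J) :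
    ‖∑ j ∈ s, diagBlock T j‖ ≤ √(#s) * ‖T‖ := by
  have hs : ∑ j ∈ s, ‖diagBlock T j‖ ^ 2 ≤ ‖T‖ ^ 2 :=
    (Finset.sum_le_sum_of_subset_of_nonneg (subset_univ s) fun _ _ _ => by positivity).trans
      (sum_frobenius_norm_sq_diagBlock_le T)
  calc ‖∑ j ∈ s, diagBlock T j‖ ≤ ∑ j ∈ s, ‖diagBlock T j‖ := norm_sum_le _ _
    _ ≤ √(#s * ∑ j ∈ s, ‖diagBlock T j‖ ^ 2) :=
      Real.le_sqrt_of_sq_le (sq_sum_le_card_mul_sum_sq ..)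
    _ ≤ √(#s * ‖T‖ ^ 2) := by gcongr
    _ = √(#s) * ‖T‖ := by rw [Real.sqrt_mul (Nat.cast_nonneg _), Real.sqrt_sq (norm_nonneg _)]

end diagBlock

section PartialTrace

variable {M₁ M₂ J₁ J₂ R₁ R₂ : Type*} [Fintype M₁] [Fintype J₁] [Fintype R₁]

theorem ptraceM1J1R1_add
    (X Y : Matrix (((M₁ × M₂) × (J₁ × J₂)) × (R₁ × R₂))
      (((M₁ × M₂) × (J₁ × J₂)) × (R₁ × R₂)) ℂ) :
    ptraceM1J1R1 (X + Y) = ptraceM1J1R1 X + ptraceM1J1R1 Y := by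
  ext p q
  simp [ptraceM1J1R1, Finset.sum_add_distrib]

theorem ptraceM1J1R1_sum {ι : Type*} (s : Finset ι)
    (X : ι → Matrix (((M₁ × M₂) × (J₁ × J₂)) × (R₁ × R₂))
      (((M₁ × M₂) × (J₁ × J₂)) × (R₁ × R₂)) ℂ) :
    ptraceM1J1R1 (∑ i ∈ s, X i) = ∑ i ∈ s, ptraceM1J1R1 (X i) :=
  map_sum (AddMonoidHom.mk' ptraceM1J1R1 ptraceM1J1R1_add) X s

theorem ptraceM1J1R1_smul (c : ℂ)
    (X : Matrix (((M₁ × M₂) × (J₁ × J₂)) × (R₁ × R₂))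
      (((M₁ × M₂) × (J₁ × J₂)) × (R₁ × R₂)) ℂ) :
    ptraceM1J1R1 (c • X) = c • ptraceM1J1R1 X := by
  ext p q
  simp [ptraceM1J1R1, Finset.mul_sum]

theorem frobenius_norm_diagonal_card_mul_sum_indicator_le {ι : Type*} [Fintype M₂] [Fintype J₂]
    [DecidableEq M₂] [DecidableEq J₂] [DecidableEq ι] (β : J₁ × J₂ → ι) (α : ι) :
    ‖diagonal fun q : M₂ × J₂ =>
        (Fintype.card M₁ : ℂ) * ∑ j₁, if β (j₁, q.2) = α then 1 else 0‖ ≤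
      √(Fintype.card (M₂ × J₂)) * (Fintype.card M₁ * Fintype.card J₁) := by
  refine frobenius_norm_diagonal_le (by positivity) fun q => ?_
  rw [norm_mul, Complex.norm_natCast, Finset.sum_boole, Complex.norm_natCast]
  gcongr
  exact card_filter_le _ _

variable [DecidableEq M₁] [DecidableEq M₂] [DecidableEq J₁] [DecidableEq J₂]

theorem ptraceM1J1R1_one_kronecker_diagonal_kronecker (d : J₁ × J₂ → ℂ)
    (K : Matrix (R₁ × R₂) (R₁ × R₂) ℂ) :
    ptraceM1J1R1 (((1 : Matrix (M₁ × M₂) (M₁ × M₂) ℂ) ⊗ₖ diagonal d) ⊗ₖ K) =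
      diagonal (fun q : M₂ × J₂ => (Fintype.card M₁ : ℂ) * ∑ j₁, d (j₁, q.2)) ⊗ₖ ptraceN K := by
  ext ⟨⟨m, j⟩, r⟩ ⟨⟨m', j'⟩, r'⟩
  simp only [ptraceM1J1R1, ptraceN, of_apply, kronecker_apply, one_apply, diagonal_apply,
    Prod.mk.injEq, true_and]
  by_cases hm : m = m'
  · by_cases hj : j = j'
    · subst hm hj
      simp only [↓reduceIte, and_self, one_mul, Finset.sum_const, card_univ, nsmul_eq_mul,
        Finset.mul_sum, Finset.sum_mul, mul_assoc]
      exact Finset.sum_comm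
    · simp [hj]
  · simp [hm]

theorem ptraceN_ptraceN_mul_mul_eq_sum_diagBlock [Fintype M₂] [Fintype J₂] [Fintype R₂]
    [DecidableEq R₁] [DecidableEq R₂] (d : J₁ × J₂ → ℂ)
    (A : Matrix (((M₁ × M₂) × (J₁ × J₂)) × (R₁ × R₂))
      (((M₁ × M₂) × (J₁ × J₂)) × (R₁ × R₂)) ℂ) :
    ptraceN (ptraceN
      ((((1 : Matrix (M₁ × M₂) (M₁ × M₂) ℂ) ⊗ₖ diagonal d) ⊗ₖ
          (1 : Matrix (R₁ × R₂) (R₁ × R₂) ℂ)) * A *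
        (((1 : Matrix (M₁ × M₂) (M₁ × M₂) ℂ) ⊗ₖ diagonal d) ⊗ₖ
          (1 : Matrix (R₁ × R₂) (R₁ × R₂) ℂ)))) =
      ∑ j, (d j * d j) • diagBlock (ptraceMR1 A) j := by
  simp only [← diagonal_one, diagonal_kronecker_diagonal]
  ext r r'
  simp only [ptraceN, ptraceMR1, diagBlock, of_apply, Matrix.sum_apply, Matrix.smul_apply,
    smul_eq_mul, diagonal_mul, mul_diagonal, one_mul, mul_one]
  rw [Finset.sum_comm, Fintype.sum_prod_type, Finset.sum_comm]
  refine Finset.sum_congr rfl fun j _ => ?_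
  simp only [Finset.mul_sum]
  exact Finset.sum_congr rfl fun _ _ => Finset.sum_congr rfl fun _ _ => by ring

end PartialTrace

theorem inv_mul_mul_sqrt_mul_sqrt_eq {x y u v k t : ℝ} (hx : x ≠ 0) (hu : 0 ≤ u) :
    (x * y * k)⁻¹ * (√y * √v * (x * u) * (√k * t)) = √(u * v * u) / √y * (1 / √k) * t := by
  have hsqrt : √(u * v * u) = u * √v := by
    rw [mul_right_comm, Real.sqrt_mul (mul_self_nonneg u), Real.sqrt_mul_self hu]
  calc _ = (x / x) * (√y / y) * (√k / k) * (u * √v) * t := by ring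
    _ = _ := by rw [div_self hx, Real.sqrt_div_self', Real.sqrt_div_self', hsqrt]; ring

theorem block_depolarising_channel_bound_general
    {M₁ M₂ J₁ J₂ R₁ R₂ : Type*}
    [Fintype M₁] [Fintype M₂] [Fintype J₁] [Fintype J₂] [Fintype R₁] [Fintype R₂]
    [DecidableEq M₁] [DecidableEq M₂] [DecidableEq J₁] [DecidableEq J₂] [DecidableEq R₁] [DecidableEq R₂]
    [Nonempty M₁]
    {B : ℕ} (β : J₁ × J₂ → Fin B)
    (P : Fin B → Matrix (J₁ × J₂) (J₁ × J₂) ℂ)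
    (hP : ∀ α, P α = Matrix.diagonal fun j => if β j = α then 1 else 0)
    (A CA : Matrix (((M₁ × M₂) × (J₁ × J₂)) × (R₁ × R₂))
                   (((M₁ × M₂) × (J₁ × J₂)) × (R₁ × R₂)) ℂ)
    (hCA : CA = ∑ α : Fin B,
      (((Fintype.card (M₁ × M₂) : ℂ)) * (Fintype.card {j : J₁ × J₂ // β j = α} : ℂ))⁻¹ •
        (((1 : Matrix (M₁ × M₂) (M₁ × M₂) ℂ) ⊗ₖ P α) ⊗ₖ
          ptraceN ((((1 : Matrix (M₁ × M₂) (M₁ × M₂) ℂ) ⊗ₖ P α) ⊗ₖ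
              (1 : Matrix (R₁ × R₂) (R₁ × R₂) ℂ)) * A *
            (((1 : Matrix (M₁ × M₂) (M₁ × M₂) ℂ) ⊗ₖ P α) ⊗ₖ
              (1 : Matrix (R₁ × R₂) (R₁ × R₂) ℂ))))) :
    frobeniusNorm (ptraceM1J1R1 CA) ≤
      (Real.sqrt ((Fintype.card (J₁ × J₂) : ℝ) * (Fintype.card J₁ : ℝ)) /
          Real.sqrt (Fintype.card M₂ : ℝ)) *
        (∑ α : Fin B, 1 / Real.sqrt (Fintype.card {j : J₁ × J₂ // β j = α} : ℝ)) *
        frobeniusNorm (ptraceMR1 A) := by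
  set T := ptraceMR1 A
  set n : Fin B → ℕ := fun α => Fintype.card {j : J₁ × J₂ // β j = α}
  set W : Fin B → Matrix (M₂ × J₂) (M₂ × J₂) ℂ := fun α => diagonal fun q =>
    (Fintype.card M₁ : ℂ) * ∑ j₁, if β (j₁, q.2) = α then 1 else 0
  have hreduced : ptraceM1J1R1 CA = ∑ α, ((Fintype.card (M₁ × M₂) : ℂ) * n α)⁻¹ •
      (W α ⊗ₖ ∑ j ∈ univ.filter (β · = α), diagBlock T j) := by
    rw [hCA, ptraceM1J1R1_sum]
    refine Finset.sum_congr rfl fun α _ => ?_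
    rw [ptraceM1J1R1_smul, hP, ptraceM1J1R1_one_kronecker_diagonal_kronecker,
      ptraceN_ptraceN_mul_mul_eq_sum_diagBlock, Finset.sum_filter]
    congr 3
    ext j : 1
    split_ifs <;> simp [T]
  have hblock : ∀ α, ‖∑ j ∈ univ.filter (β · = α), diagBlock T j‖ ≤ √(n α) * ‖T‖ := fun α => by
    simpa only [n, Fintype.card_subtype] using frobenius_norm_sum_diagBlock_le T _
  rw [frobeniusNorm_eq_norm, frobeniusNorm_eq_norm, hreduced]
  calc _ ≤ ∑ α, ‖((Fintype.card (M₁ × M₂) : ℂ) * n α)⁻¹‖ *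
        (‖W α‖ * ‖∑ j ∈ univ.filter (β · = α), diagBlock T j‖) :=
      norm_sum_le_of_le _ fun α _ => by rw [norm_smul, frobenius_norm_kronecker]
    _ ≤ ∑ α, ‖((Fintype.card (M₁ × M₂) : ℂ) * n α)⁻¹‖ *
        (√(Fintype.card (M₂ × J₂)) * (Fintype.card M₁ * Fintype.card J₁) * (√(n α) * ‖T‖)) := by
      gcongr with α
      · exact frobenius_norm_diagonal_card_mul_sum_indicator_le β α
      · exact hblock α
    _ = _ := by
      rw [Finset.mul_sum, Finset.sum_mul]
      refine Finset.sum_congr rfl fun α _ => ?_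
      simp only [norm_inv, norm_mul, Complex.norm_natCast, Fintype.card_prod, Nat.cast_mul,
        Real.sqrt_mul (Nat.cast_nonneg _)]
      exact inv_mul_mul_sqrt_mul_sqrt_eq (Nat.cast_ne_zero.2 Fintype.card_ne_zero)
        (Nat.cast_nonneg _)

/-- **Frobenius-norm bound for the block-depolarising channel.**
For the channel `C[A]` which fully depolarises the factor `M = M₁ × M₂` and
block-depolarises the factor `J = J₁ × J₂` along the blocks `β⁻¹(α)`, the Frobenius
norm of the partial trace of `C[A]` over `M₁ × J₁ × R₁` is bounded by
`(√(n·|J₁|)/√|M₂|)·(Σ_α 1/√n_α)·‖Tr_{M×R₁} A‖_F`. -/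
theorem block_depolarising_channel_bound
    {M₁ M₂ J₁ J₂ R₁ R₂ : Type*}
    [Fintype M₁] [Fintype M₂] [Fintype J₁] [Fintype J₂] [Fintype R₁] [Fintype R₂]
    [DecidableEq M₁] [DecidableEq M₂] [DecidableEq J₁] [DecidableEq J₂] [DecidableEq R₁] [DecidableEq R₂]
    [Nonempty M₁] [Nonempty M₂] [Nonempty J₁] [Nonempty J₂] [Nonempty R₁] [Nonempty R₂]
    {B : ℕ} (hB : 1 ≤ B) (β : J₁ × J₂ → Fin B) (hβ : Function.Surjective β)
    (P : Fin B → Matrix (J₁ × J₂) (J₁ × J₂) ℂ)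
    (hP : ∀ α, P α = Matrix.diagonal fun j => if β j = α then 1 else 0)
    (A CA : Matrix (((M₁ × M₂) × (J₁ × J₂)) × (R₁ × R₂))
                   (((M₁ × M₂) × (J₁ × J₂)) × (R₁ × R₂)) ℂ)
    (hCA : CA = ∑ α : Fin B,
      (((Fintype.card (M₁ × M₂) : ℂ)) * (Fintype.card {j : J₁ × J₂ // β j = α} : ℂ))⁻¹ •
        (((1 : Matrix (M₁ × M₂) (M₁ × M₂) ℂ) ⊗ₖ P α) ⊗ₖ
          ptraceN ((((1 : Matrix (M₁ × M₂) (M₁ × M₂) ℂ) ⊗ₖ P α) ⊗ₖ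
              (1 : Matrix (R₁ × R₂) (R₁ × R₂) ℂ)) * A *
            (((1 : Matrix (M₁ × M₂) (M₁ × M₂) ℂ) ⊗ₖ P α) ⊗ₖ
              (1 : Matrix (R₁ × R₂) (R₁ × R₂) ℂ))))) :
    frobeniusNorm (ptraceM1J1R1 CA) ≤
      (Real.sqrt ((Fintype.card (J₁ × J₂) : ℝ) * (Fintype.card J₁ : ℝ)) /
          Real.sqrt (Fintype.card M₂ : ℝ)) *
        (∑ α : Fin B, 1 / Real.sqrt (Fintype.card {j : J₁ × J₂ // β j = α} : ℝ)) *
        frobeniusNorm (ptraceMR1 A) :=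
  block_depolarising_channel_bound_general β P hP A CA hCA
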